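/- arXiv:math/0404459 — 2 statements merged into one kernel-verified Lean document; each statement's English description precedes it below -/
import Mathlib

section
/- The element z lies in K, is central in K, and the quotient of K by the subgroup generated by z is isomorphic to the free abelian group ℤ³⁴; thus K is a central extension of ℤ³⁴ by ℤ. -/
/-- Generators of the group `H`: `x i`, `y i` for `i : Fin 18`, and `z`. -/
inductive HGen : Type
  | x : Fin 18 → HGen
  | y : Fin 18 → HGen
  | z : HGen

/-- The free-group generator corresponding to `x i`. -/
def fx (i : Fin 18) : FreeGroup HGen := FreeGroup.of (HGen.x i)
/-- The free-group generator corresponding to `y i`. -/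
def fy (i : Fin 18) : FreeGroup HGen := FreeGroup.of (HGen.y i)
/-- The free-group generator corresponding to `z`. -/
def fz : FreeGroup HGen := FreeGroup.of HGen.z

/-- The relations of the presentation of `H`:
`[xᵢ, xⱼ] = [yᵢ, yⱼ] = [xᵢ, yⱼ] = 1` for `i ≠ j`, `[xᵢ, yᵢ] = z`,
and `z` commutes with all the generators. -/
def HRels : Set (FreeGroup HGen) :=
  { r | (∃ i j : Fin 18, i ≠ j ∧ r = fx i * fx j * (fx i)⁻¹ * (fx j)⁻¹)
      ∨ (∃ i j : Fin 18, i ≠ j ∧ r = fy i * fy j * (fy i)⁻¹ * (fy j)⁻¹)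
      ∨ (∃ i j : Fin 18, i ≠ j ∧ r = fx i * fy j * (fx i)⁻¹ * (fy j)⁻¹)
      ∨ (∃ i : Fin 18, r = fx i * fy i * (fx i)⁻¹ * (fy i)⁻¹ * fz⁻¹)
      ∨ (∃ i : Fin 18, r = fx i * fz * (fx i)⁻¹ * fz⁻¹)
      ∨ (∃ i : Fin 18, r = fy i * fz * (fy i)⁻¹ * fz⁻¹) }

/-- The group `H`, given by the above presentation. -/
abbrev Hgrp : Type := PresentedGroup HRels

/-- The generator `xᵢ` of `H`. -/
def xH (i : Fin 18) : Hgrp := PresentedGroup.of (HGen.x i)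
/-- The generator `yᵢ` of `H`. -/
def yH (i : Fin 18) : Hgrp := PresentedGroup.of (HGen.y i)
/-- The generator `z` of `H`. -/
def zH : Hgrp := PresentedGroup.of HGen.z

/-!
Modulo `z` all generators of `H` commute, so `H/⟨z⟩` is abelian; the commuting images of the
`xᵢ, yᵢ` give a homomorphism `ℤ³⁶ → H/⟨z⟩` inverse to the coordinate map, hence `H → ℤ³⁶` is onto
with kernel `⟨z⟩`. In the coordinates `v ↦ (∑ v|ₓ, ∑ v|ᵧ; all entries but those of x₁₈, y₁₈)` of
`ℤ³⁶ ≅ ℤ² × ℤ³⁴`, the map `ab` becomes the projection to `ℤ²`, so `K` maps onto `ℤ³⁴` with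
kernel `⟨z⟩`.
-/

open Subgroup
open scoped commutatorElement

theorem MonoidHom.nonempty_ker_fst_comp_quotient_mulEquiv {G A B : Type*} [Group G] [Group A]
    [Group B] (f : G →* A × B) (hf : Function.Surjective f) {g : G} (hker : f.ker = zpowers g)
    (hg : g ∈ ((MonoidHom.fst A B).comp f).ker) :
    Nonempty ((((MonoidHom.fst A B).comp f).ker ⧸
      normalClosure {(⟨g, hg⟩ : ((MonoidHom.fst A B).comp f).ker)}) ≃* B) := by
  let K := ((MonoidHom.fst A B).comp f).ker
  let ψ : K →* B := (MonoidHom.snd A B).comp (f.comp K.subtype)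
  have hψ : Function.Surjective ψ := by
    intro b
    obtain ⟨x, hx⟩ := hf (1, b)
    exact ⟨⟨x, by simp [K, hx]⟩, by simp [ψ, hx]⟩
  have hkerψ : ψ.ker = normalClosure {⟨g, hg⟩} := by
    apply le_antisymm
    · intro k hk
      have hk' : (k : G) ∈ f.ker :=
        Prod.ext (MonoidHom.mem_ker.mp k.2) (MonoidHom.mem_ker.mp hk)
      rw [hker] at hk'
      obtain ⟨n, hn⟩ := mem_zpowers_iff.mp hk'
      have : k = ⟨g, hg⟩ ^ n := Subtype.ext (by simp [hn])
      rw [this]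
      exact zpow_mem (subset_normalClosure (Set.mem_singleton _)) n
    · refine normalClosure_le_normal ?_
      rintro _ rfl
      have : g ∈ f.ker := by rw [hker]; exact mem_zpowers g
      simp [ψ, MonoidHom.mem_ker.mp this]
  exact ⟨(QuotientGroup.quotientMulEquivOfEq hkerψ.symm).trans
    (QuotientGroup.quotientKerEquivOfSurjective ψ hψ)⟩

def Fin.sumInitAddEquiv (M : Type*) [AddCommGroup M] (n : ℕ) :
    (Fin (n + 1) → M) ≃+ M × (Fin n → M) where
  toFun v := (∑ i, v i, Fin.init v)
  invFun p := Fin.snoc p.2 (p.1 - ∑ i, p.2 i)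
  left_inv v := by simp [Fin.sum_univ_castSucc, Fin.init]
  right_inv p := by simp [Fin.sum_univ_castSucc]
  map_add' v w := by simp [Finset.sum_add_distrib]; rfl

def Fin.appendAddEquiv (M : Type*) [AddCommMonoid M] (m n : ℕ) :
    (Fin m → M) × (Fin n → M) ≃+ (Fin (m + n) → M) :=
  (LinearEquiv.sumArrowLequivProdArrow _ _ ℕ M).symm.toAddEquiv.trans
    (LinearEquiv.funCongrLeft ℕ M finSumFinEquiv.symm).toAddEquiv

def Fin.sumArrowAddEquivSumsProd (M : Type*) [AddCommGroup M] (m n : ℕ) :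
    (Fin (m + 1) ⊕ Fin (n + 1) → M) ≃+ (M × M) × (Fin (m + n) → M) :=
  (LinearEquiv.sumArrowLequivProdArrow _ _ ℕ M).toAddEquiv.trans <|
    ((Fin.sumInitAddEquiv M m).prodCongr (Fin.sumInitAddEquiv M n)).trans <|
      (AddEquiv.prodProdProdComm _ _ _ _).trans <|
        (AddEquiv.refl _).prodCongr (Fin.appendAddEquiv M m n)

lemma mk_commutatorElement_eq_one {a b : FreeGroup HGen} (h : ⁅a, b⁆ ∈ HRels) :
    ⁅PresentedGroup.mk HRels a, PresentedGroup.mk HRels b⁆ = 1 := by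
  rw [← map_commutatorElement]
  exact PresentedGroup.one_of_mem h

lemma xH_commute_xH {i j : Fin 18} (hij : i ≠ j) : Commute (xH i) (xH j) :=
  commutatorElement_eq_one_iff_commute.mp <| mk_commutatorElement_eq_one <|
    Or.inl ⟨i, j, hij, rfl⟩

lemma yH_commute_yH {i j : Fin 18} (hij : i ≠ j) : Commute (yH i) (yH j) :=
  commutatorElement_eq_one_iff_commute.mp <| mk_commutatorElement_eq_one <|
    Or.inr <| Or.inl ⟨i, j, hij, rfl⟩

lemma xH_commute_yH {i j : Fin 18} (hij : i ≠ j) : Commute (xH i) (yH j) :=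
  commutatorElement_eq_one_iff_commute.mp <| mk_commutatorElement_eq_one <|
    Or.inr <| Or.inr <| Or.inl ⟨i, j, hij, rfl⟩

lemma xH_commute_zH (i : Fin 18) : Commute (xH i) zH :=
  commutatorElement_eq_one_iff_commute.mp <| mk_commutatorElement_eq_one <|
    Or.inr <| Or.inr <| Or.inr <| Or.inr <| Or.inl ⟨i, rfl⟩

lemma yH_commute_zH (i : Fin 18) : Commute (yH i) zH :=
  commutatorElement_eq_one_iff_commute.mp <| mk_commutatorElement_eq_one <|
    Or.inr <| Or.inr <| Or.inr <| Or.inr <| Or.inr ⟨i, rfl⟩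

lemma commutatorElement_xH_yH (i : Fin 18) : ⁅xH i, yH i⁆ = zH :=
  PresentedGroup.mk_eq_mk_of_mul_inv_mem <| Or.inr <| Or.inr <| Or.inr <| Or.inl ⟨i, rfl⟩

lemma zH_mem_center : zH ∈ center Hgrp := by
  rw [← centralizer_univ, ← coe_top, ← PresentedGroup.closure_range_of, centralizer_closure,
    mem_centralizer_iff]
  rintro _ ⟨g, rfl⟩
  cases g with
  | x i => exact (xH_commute_zH i).eq
  | y i => exact (yH_commute_zH i).eq
  | z => rfl

instance : (zpowers zH).Normal where
  conj_mem n hn g := by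
    rw [mem_center_iff.mp (zpowers_le.mpr zH_mem_center hn) g, mul_inv_cancel_right]
    exact hn

abbrev xyH : Fin 18 ⊕ Fin 18 → Hgrp := Sum.elim xH yH

lemma commutatorElement_xyH_mem_zpowers (a b : Fin 18 ⊕ Fin 18) :
    ⁅xyH a, xyH b⁆ ∈ zpowers zH := by
  have one_mem_of_commute {g h : Hgrp} (hgh : Commute g h) : ⁅g, h⁆ ∈ zpowers zH := by
    rw [commutatorElement_eq_one_iff_commute.mpr hgh]; exact one_mem _
  rcases a with i | i <;> rcases b with j | j <;> obtain rfl | hij := eq_or_ne i j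
  · exact one_mem_of_commute (Commute.refl _)
  · exact one_mem_of_commute (xH_commute_xH hij)
  · exact commutatorElement_xH_yH i ▸ mem_zpowers zH
  · exact one_mem_of_commute (xH_commute_yH hij)
  · show ⁅yH i, xH i⁆ ∈ _
    rw [← commutatorElement_inv, commutatorElement_xH_yH]
    exact inv_mem (mem_zpowers zH)
  · exact one_mem_of_commute (xH_commute_yH hij.symm).symm
  · exact one_mem_of_commute (Commute.refl _)
  · exact one_mem_of_commute (yH_commute_yH hij)

lemma commute_mk_xyH (a b : Fin 18 ⊕ Fin 18) :
    Commute (xyH a : Hgrp ⧸ zpowers zH) (xyH b) :=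
  commutatorElement_eq_one_iff_commute.mp <|
    (map_commutatorElement (QuotientGroup.mk' (zpowers zH)) _ _).symm.trans <|
      (QuotientGroup.eq_one_iff _).mpr (commutatorElement_xyH_mem_zpowers a b)

abbrev Coords : Type := Fin 18 ⊕ Fin 18 → Multiplicative ℤ

def ofCoords : Coords →* Hgrp ⧸ zpowers zH :=
  MonoidHom.noncommPiCoprod (fun a => zpowersHom _ (xyH a : Hgrp ⧸ zpowers zH))
    fun a b _ _ _ => (commute_mk_xyH a b).zpow_zpow _ _

def coordsOfGen : HGen → Coords
  | .x i => Pi.mulSingle (.inl i) (.ofAdd 1)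
  | .y i => Pi.mulSingle (.inr i) (.ofAdd 1)
  | .z => 1

lemma coordsOfGen_rels : ∀ r ∈ HRels, FreeGroup.lift coordsOfGen r = 1 := by
  rintro r (⟨i, j, -, rfl⟩ | ⟨i, j, -, rfl⟩ | ⟨i, j, -, rfl⟩ | ⟨i, rfl⟩ | ⟨i, rfl⟩ | ⟨i, rfl⟩) <;>
    simp [fx, fy, fz, coordsOfGen]

def coords : Hgrp →* Coords := PresentedGroup.toGroup coordsOfGen_rels

lemma coords_xH (i : Fin 18) : coords (xH i) = Pi.mulSingle (.inl i) (.ofAdd 1) :=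
  PresentedGroup.toGroup.of coordsOfGen_rels

lemma coords_yH (i : Fin 18) : coords (yH i) = Pi.mulSingle (.inr i) (.ofAdd 1) :=
  PresentedGroup.toGroup.of coordsOfGen_rels

lemma coords_zH : coords zH = 1 := PresentedGroup.toGroup.of coordsOfGen_rels

lemma ofCoords_mulSingle (a : Fin 18 ⊕ Fin 18) (n : Multiplicative ℤ) :
    ofCoords (Pi.mulSingle a n) = (xyH a : Hgrp ⧸ zpowers zH) ^ n.toAdd :=
  MonoidHom.noncommPiCoprod_mulSingle
    (ϕ := fun a => zpowersHom _ (xyH a : Hgrp ⧸ zpowers zH)) a n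

def quotientZpowersEquiv : Hgrp ⧸ zpowers zH ≃* Coords :=
  MonoidHom.toMulEquiv (QuotientGroup.lift _ coords (zpowers_le.mpr coords_zH)) ofCoords
    (by
      refine QuotientGroup.monoidHom_ext _ (PresentedGroup.ext fun g => ?_)
      cases g with
      | x i =>
        show ofCoords (coords (xH i)) = (xH i : Hgrp ⧸ zpowers zH)
        simp [coords_xH, ofCoords_mulSingle]
      | y i =>
        show ofCoords (coords (yH i)) = (yH i : Hgrp ⧸ zpowers zH)
        simp [coords_yH, ofCoords_mulSingle]
      | z =>
        show ofCoords (coords zH) = (zH : Hgrp ⧸ zpowers zH)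
        rw [coords_zH, map_one, eq_comm, QuotientGroup.eq_one_iff]
        exact mem_zpowers zH)
    (by
      refine MonoidHom.functions_ext' _ _ _ fun a => MonoidHom.ext_mint ?_
      rcases a with i | i <;> simp [ofCoords_mulSingle, coords_xH, coords_yH])

lemma quotientZpowersEquiv_mk (h : Hgrp) : quotientZpowersEquiv h = coords h := rfl

lemma coords_surjective : Function.Surjective coords := by
  intro v
  obtain ⟨q, rfl⟩ := quotientZpowersEquiv.surjective v
  obtain ⟨h, rfl⟩ := QuotientGroup.mk_surjective q
  exact ⟨h, rfl⟩

lemma ker_coords : coords.ker = zpowers zH := by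
  ext h
  rw [MonoidHom.mem_ker, ← quotientZpowersEquiv_mk, MulEquiv.map_eq_one_iff,
    QuotientGroup.eq_one_iff]

def coordsEquiv : Coords ≃* Multiplicative (ℤ × ℤ) × Multiplicative (Fin 34 → ℤ) :=
  (MulEquiv.funMultiplicative _ _).symm.trans <|
    (AddEquiv.toMultiplicative (Fin.sumArrowAddEquivSumsProd ℤ 17 17)).trans
      (MulEquiv.prodMultiplicative _ _)

def bidegreeCoords : Hgrp →* Multiplicative (ℤ × ℤ) × Multiplicative (Fin 34 → ℤ) :=
  (coordsEquiv : Coords →* _).comp coords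

lemma fst_bidegreeCoords (h : Hgrp) : (bidegreeCoords h).1 =
    .ofAdd (∑ i, (coords h (.inl i)).toAdd, ∑ i, (coords h (.inr i)).toAdd) := rfl

lemma fst_comp_bidegreeCoords (ab : Hgrp →* Multiplicative (ℤ × ℤ))
    (habx : ∀ i : Fin 18, ab (xH i) = Multiplicative.ofAdd (1, 0))
    (haby : ∀ i : Fin 18, ab (yH i) = Multiplicative.ofAdd (0, 1))
    (habz : ab zH = 1) : (MonoidHom.fst _ _).comp bidegreeCoords = ab := by
  refine PresentedGroup.ext fun g => ?_
  cases g with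
  | x i =>
    show (bidegreeCoords (xH i)).1 = ab (xH i)
    simp [fst_bidegreeCoords, coords_xH, habx, Pi.mulSingle_apply, apply_ite Multiplicative.toAdd]
  | y i =>
    show (bidegreeCoords (yH i)).1 = ab (yH i)
    simp [fst_bidegreeCoords, coords_yH, haby, Pi.mulSingle_apply, apply_ite Multiplicative.toAdd]
  | z =>
    show (bidegreeCoords zH).1 = ab zH
    simp [fst_bidegreeCoords, coords_zH, habz]

lemma bidegreeCoords_surjective : Function.Surjective bidegreeCoords :=
  coordsEquiv.surjective.comp coords_surjective

lemma ker_bidegreeCoords : bidegreeCoords.ker = zpowers zH :=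
  (MonoidHom.ker_mulEquiv_comp _ _).trans ker_coords

/-- The element `z` lies in `K = ker(ab)`, is central in `K`, and the quotient
of `K` by the subgroup generated by `z` is isomorphic to the free abelian group
`ℤ³⁴`; thus `K` is a central extension of `ℤ³⁴` by `ℤ`. -/
theorem stmt11 (ab : Hgrp →* Multiplicative (ℤ × ℤ))
    (habx : ∀ i : Fin 18, ab (xH i) = Multiplicative.ofAdd (1, 0))
    (haby : ∀ i : Fin 18, ab (yH i) = Multiplicative.ofAdd (0, 1))
    (habz : ab zH = 1) :
    ∃ hzK : zH ∈ ab.ker,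
      (∀ k : Hgrp, k ∈ ab.ker → zH * k = k * zH) ∧
      Nonempty ((↥ab.ker ⧸ Subgroup.normalClosure {(⟨zH, hzK⟩ : ↥ab.ker)})
        ≃* Multiplicative (Fin 34 → ℤ)) := by
  obtain rfl := fst_comp_bidegreeCoords ab habx haby habz
  exact ⟨habz, fun k _ => (mem_center_iff.mp zH_mem_center k).symm,
    bidegreeCoords.nonempty_ker_fst_comp_quotient_mulEquiv bidegreeCoords_surjective
      ker_bidegreeCoords habz⟩
end

section
/- The surjection ψ_C : C → S₁₈ splits: there exists a group homomorphism s : S₁₈ → C such that ψ_C ∘ s is the identity on S₁₈. (In fact s can be chosen so that its image is the subgroup of C generated by the u_e for e in a spanning tree of T.) -/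
/-- The vertices of the graph `T`: the 18 triangles of the triangulation of
the torus obtained from the 3×3 square grid with opposite sides identified.
A triangle is labelled by its unit cell `(a, b) : (ℤ/3)²` together with a
Boolean which is `false` for the lower triangle (below the diagonal of the
cell) and `true` for the upper one. -/
abbrev VT : Type := (ZMod 3 × ZMod 3) × Bool

/-- The 27 edges of the graph `T`, joining pairs of distinct triangles which
share a common side: edge `(c, 0)` is dual to the diagonal of the cell `c`,
edge `(c, 1)` to the left side of `c` and edge `(c, 2)` to the bottom side
of `c`. -/
abbrev ET : Type := (ZMod 3 × ZMod 3) × Fin 3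

/-- One endpoint of an edge of `T`. -/
def endA (e : ET) : VT :=
  if e.2 = 1 then (e.1, true) else (e.1, false)

/-- The other endpoint of an edge of `T`. -/
def endB (e : ET) : VT :=
  if e.2 = 0 then (e.1, true)
  else if e.2 = 1 then ((e.1.1 - 1, e.1.2), false)
  else ((e.1.1, e.1.2 - 1), true)

/-- Incidence between edges and vertices of `T`. -/
def incidentT (e : ET) (v : VT) : Prop := v = endA e ∨ v = endB e

/-- For each of the 9 grid vertices `p` of the torus, the six edges (in cyclic
order) of the hexagonal cycle in `T` formed by the six triangles
containing `p`. -/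
def hexEdge (p : ZMod 3 × ZMod 3) : Fin 6 → ET := fun k =>
  if k = 0 then (p, 2)
  else if k = 1 then (p, 0)
  else if k = 2 then (p, 1)
  else if k = 3 then ((p.1 - 1, p.2), 2)
  else if k = 4 then ((p.1 - 1, p.2 - 1), 0)
  else ((p.1, p.2 - 1), 1)

/-- The free-group generator corresponding to an edge `e` of `T`. -/
def fe (e : ET) : FreeGroup ET := FreeGroup.of e

/-- The relations of the presentation of the group `C`: `u_e² = 1`;
`u_e u_f = u_f u_e` when `e, f` have no common vertex;
`u_e u_f u_e = u_f u_e u_f` when `e, f` share exactly one vertex; and the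
cyclic relation `u_{e₁} u_{e₂} u_{e₃} u_{e₄} u_{e₅} = u_{e₂} u_{e₃} u_{e₄} u_{e₅} u_{e₆}`
for each of the nine hexagonal cycles. -/
def CRels : Set (FreeGroup ET) :=
  { r | (∃ e : ET, r = fe e * fe e)
      ∨ (∃ e f : ET, (∀ v : VT, ¬ (incidentT e v ∧ incidentT f v)) ∧
            r = fe e * fe f * (fe f * fe e)⁻¹)
      ∨ (∃ e f : ET, (∃! v : VT, incidentT e v ∧ incidentT f v) ∧
            r = fe e * fe f * fe e * (fe f * fe e * fe f)⁻¹)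
      ∨ (∃ p : ZMod 3 × ZMod 3,
            r = (fe (hexEdge p 0) * fe (hexEdge p 1) * fe (hexEdge p 2) *
                 fe (hexEdge p 3) * fe (hexEdge p 4)) *
                (fe (hexEdge p 1) * fe (hexEdge p 2) * fe (hexEdge p 3) *
                 fe (hexEdge p 4) * fe (hexEdge p 5))⁻¹) }

/-- The group `C`, given by the above presentation. -/
abbrev Cgrp : Type := PresentedGroup CRels

/-- The generator `u_e` of `C` corresponding to the edge `e` of `T`. -/
def uC (e : ET) : Cgrp := PresentedGroup.of e

/-- The transposition in `S₁₈` exchanging the two triangles joined by the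
edge `e` of `T`. -/
def tE (e : ET) : Equiv.Perm VT := Equiv.swap (endA e) (endB e)

/-! Along a Hamiltonian path `e₀, …, e₁₆` of `T` the generators `uᵢ = u_{eᵢ}` of `C` satisfy the
Coxeter relations of type `A₁₇`: they are involutions, consecutive ones satisfy the braid relation
and the others commute. Hence every element of `H = ⟨u₀, …, u₁₆⟩` has the normal form
`d₀ d₁ ⋯ d₁₆` with `d_k` one of the `k + 2` products `u_k u_{k-1} ⋯ u_j` (`j ≤ k + 1`), so
`|H| ≤ 18!`. On the other hand `ψ` maps `H` onto the subgroup of `S₁₈` generated by the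
transpositions along a Hamiltonian path, which is all of `S₁₈`. So `ψ` restricts to an
isomorphism `H ≃* S₁₈`, whose inverse is the required section. -/

open Set Subgroup SimpleGraph Equiv
open scoped Pointwise

section CoxeterTypeA

variable {G : Type*} [Group G]

structure IsCoxeterTypeA (x : ℕ → G) (n : ℕ) : Prop where
  mul_self : ∀ i < n, x i * x i = 1
  braid : ∀ i, i + 1 < n → x i * x (i + 1) * x i = x (i + 1) * x i * x (i + 1)
  commute : ∀ i j, i + 1 < j → j < n → Commute (x i) (x j)

variable (x : ℕ → G) {n k : ℕ}

/-- `descProd x k j = x k * x (k - 1) * ⋯ * x j`, which is `1` when `k < j`. -/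
def descProd (k j : ℕ) : G := ((List.range' j (k + 1 - j)).reverse.map x).prod

lemma descProd_of_lt {j : ℕ} (h : k < j) : descProd x k j = 1 := by
  simp [descProd, Nat.sub_eq_zero_of_le h]

lemma descProd_eq_mul {j : ℕ} (h : j ≤ k) : descProd x k j = descProd x k (j + 1) * x j := by
  rw [descProd, descProd, show k + 1 - j = k + 1 - (j + 1) + 1 by omega, List.range'_succ]
  simp

def descProds (k : ℕ) : Set G := range fun j : Fin (k + 2) => descProd x k j

variable {x}

lemma IsCoxeterTypeA.commute_descProd (hx : IsCoxeterTypeA x n) (hk : k < n) {i j : ℕ}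
    (hij : i + 1 < j) : Commute (x i) (descProd x k j) := by
  refine Commute.list_prod_right _ _ fun y hy => ?_
  obtain ⟨l, hl, rfl⟩ := List.mem_map.1 hy
  rw [List.mem_reverse, List.mem_range'_1] at hl
  exact hx.commute i l (by omega) (by omega)

lemma IsCoxeterTypeA.descProd_mul_eq_mul_descProd (hx : IsCoxeterTypeA x n) (hk : k < n) :
    ∀ d j, j + d + 1 ≤ k → descProd x k j * x (j + d + 1) = x (j + d) * descProd x k j := by
  intro d
  induction d with
  | zero =>
    intro j hj
    set D := descProd x k (j + 2)
    have hD : descProd x k j = D * x (j + 1) * x j := by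
      rw [descProd_eq_mul x (by omega), descProd_eq_mul x (by omega : j + 1 ≤ k)]
    have hcomm : Commute (x j) D := hx.commute_descProd hk (by omega)
    calc descProd x k j * x (j + 0 + 1) = D * (x (j + 1) * x j * x (j + 1)) := by
          rw [hD]; simp only [add_zero, mul_assoc]
      _ = D * x j * x (j + 1) * x j := by rw [← hx.braid j (by omega)]; simp only [mul_assoc]
      _ = x (j + 0) * descProd x k j := by rw [← hcomm.eq, hD]; simp only [add_zero, mul_assoc]
  | succ d ih =>
    intro j hj
    rw [descProd_eq_mul x (by omega), mul_assoc,
      (hx.commute j (j + (d + 1) + 1) (by omega) (by omega)).eq, ← mul_assoc,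
      show j + (d + 1) + 1 = j + 1 + d + 1 by omega, ih (j + 1) (by omega), mul_assoc,
      show j + 1 + d = j + (d + 1) by omega]

lemma IsCoxeterTypeA.descProd_mul_mem (hx : IsCoxeterTypeA x n) (hk : k < n) {i j : ℕ}
    (hi : i ≤ k) (hj : j ≤ k + 1) :
    descProd x k j * x i ∈ (closure (x '' Iio k) : Set G) * descProds x k := by
  have hgen : ∀ l < k, x l ∈ closure (x '' Iio k) := fun l hl => subset_closure ⟨l, hl, rfl⟩
  rcases lt_trichotomy (i + 1) j with hij | rfl | hji
  · exact mem_mul.2 ⟨x i, hgen i (by omega), _, ⟨⟨j, by omega⟩, rfl⟩,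
      (hx.commute_descProd hk hij).eq⟩
  · exact mem_mul.2 ⟨1, one_mem _, _, ⟨⟨i, by omega⟩, rfl⟩,
      (one_mul _).trans (descProd_eq_mul x hi)⟩
  · obtain rfl | hlt : i = j ∨ j < i := by omega
    · refine mem_mul.2 ⟨1, one_mem _, _, ⟨⟨i + 1, by omega⟩, rfl⟩, ?_⟩
      rw [one_mul, descProd_eq_mul x hi, mul_assoc, hx.mul_self i (by omega), mul_one]
    · obtain ⟨d, rfl⟩ : ∃ d, i = j + d + 1 := ⟨i - j - 1, by omega⟩
      exact mem_mul.2 ⟨x (j + d), hgen _ (by omega), _, ⟨⟨j, by omega⟩, rfl⟩,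
        (hx.descProd_mul_eq_mul_descProd hk d j hi).symm⟩

lemma IsCoxeterTypeA.closure_succ_subset (hx : IsCoxeterTypeA x n) (hk : k < n) :
    (closure (x '' Iio (k + 1)) : Set G) ⊆ (closure (x '' Iio k) : Set G) * descProds x k := by
  have hstep : ∀ g ∈ (closure (x '' Iio k) : Set G) * descProds x k, ∀ i ≤ k,
      g * x i ∈ (closure (x '' Iio k) : Set G) * descProds x k := by
    rintro _ ⟨a, ha, _, ⟨j, rfl⟩, rfl⟩ i hi
    obtain ⟨b, hb, d, hd, hbd⟩ := mem_mul.1 (hx.descProd_mul_mem hk hi (j := j) (by omega))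
    exact mem_mul.2 ⟨a * b, mul_mem ha hb, d, hd, by rw [mul_assoc, hbd, mul_assoc]⟩
  intro g hg
  induction hg using closure_induction_right with
  | one => exact mem_mul.2 ⟨1, one_mem _, 1, ⟨Fin.last _, descProd_of_lt x (by simp)⟩, one_mul 1⟩
  | mul_right g _ y hy ih =>
    obtain ⟨i, hi, rfl⟩ := hy
    exact hstep g ih i (Nat.lt_succ_iff.1 hi)
  | mul_inv_cancel g _ y hy ih =>
    obtain ⟨i, hi, rfl⟩ := hy
    rw [inv_eq_of_mul_eq_one_right (hx.mul_self i (by simp at hi; omega))]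
    exact hstep g ih i (Nat.lt_succ_iff.1 hi)

lemma IsCoxeterTypeA.finite_closure_and_natCard_le (hx : IsCoxeterTypeA x n) :
    ∀ k ≤ n, (closure (x '' Iio k) : Set G).Finite ∧
      Nat.card (closure (x '' Iio k)) ≤ (k + 1).factorial
  | 0, _ => by simp
  | k + 1, hk => by
    obtain ⟨hfin, hcard⟩ := hx.finite_closure_and_natCard_le k (by omega)
    have hsub := hx.closure_succ_subset (by omega : k < n)
    have hfin' := hfin.mul (finite_range fun j : Fin (k + 2) => descProd x k j)
    refine ⟨hfin'.subset hsub, ?_⟩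
    calc Nat.card (closure (x '' Iio (k + 1)))
        ≤ Nat.card ((closure (x '' Iio k) : Set G) * descProds x k) := Nat.card_mono hfin' hsub
      _ ≤ Nat.card (closure (x '' Iio k)) * Nat.card (descProds x k) := natCard_mul_le
      _ ≤ (k + 1).factorial * (k + 2) := by
        gcongr
        exact (Finite.card_range_le _).trans (Nat.card_fin _).le
      _ = (k + 2).factorial := by rw [Nat.factorial_succ (k + 1)]; ring

end CoxeterTypeA

theorem MonoidHom.exists_rightInverse_range_eq {G K : Type*} [Group G] [Group K] (ψ : G →* K)
    {H : Subgroup G} [Finite H] (hcard : Nat.card H ≤ Nat.card K) (hmap : H.map ψ = ⊤) :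
    ∃ s : K →* G, ψ.comp s = MonoidHom.id K ∧ s.range = H := by
  have hsurj : Function.Surjective (ψ.domRestrict H) := by
    rwa [← MonoidHom.range_eq_top, MonoidHom.domRestrict_range]
  let e := MulEquiv.ofBijective (ψ.domRestrict H) (hsurj.bijective_of_nat_card_le hcard)
  refine ⟨H.subtype.comp e.symm.toMonoidHom, ?_, ?_⟩
  · ext k
    exact e.apply_symm_apply k
  · rw [MonoidHom.range_comp, MonoidHom.range_eq_top.2 e.symm.surjective,
      ← MonoidHom.range_eq_map, H.range_subtype]

theorem Equiv.Perm.closure_range_swap_eq_top {α : Type*} [DecidableEq α] {n : ℕ}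
    (π : Fin (n + 1) ≃ α) :
    closure (range fun i : Fin n => swap (π i.castSucc) (π i.succ)) = ⊤ := by
  have hrange : (range fun i : Fin n => swap (π i.castSucc) (π i.succ)) =
      π.permCongrHom.toMonoidHom '' range fun i : Fin n => swap i.castSucc i.succ := by
    rw [← range_comp]
    exact congrArg range (funext fun i => (symm_trans_swap_trans _ _ π).symm)
  rw [hrange, ← MonoidHom.map_closure,
    closure_eq_top_of_mclosure_eq_top (Perm.mclosure_swap_castSucc_succ n),
    map_top_of_surjective _ π.permCongrHom.surjective]

theorem SimpleGraph.isTree_pathGraph (n : ℕ) : (pathGraph (n + 1)).IsTree := by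
  have hedges : (pathGraph (n + 1)).edgeSet = range fun i : Fin n => s(i.castSucc, i.succ) := by
    ext e
    induction e using Sym2.ind with
    | _ a b =>
      simp only [mem_edgeSet, pathGraph_adj, mem_range, Sym2.eq_iff, Fin.ext_iff,
        Fin.val_castSucc, Fin.val_succ]
      constructor
      · rintro (h | h)
        · exact ⟨⟨a, by omega⟩, Or.inl ⟨rfl, h⟩⟩
        · exact ⟨⟨b, by omega⟩, Or.inr ⟨rfl, h⟩⟩
      · rintro ⟨i, ⟨h₁, h₂⟩ | ⟨h₁, h₂⟩⟩ <;> omega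
  have hinj : Function.Injective fun i : Fin n => s(i.castSucc, i.succ) := by
    intro i j h
    simp only [Sym2.eq_iff, Fin.ext_iff, Fin.val_castSucc, Fin.val_succ] at h
    omega
  rw [isTree_iff_connected_and_card, hedges, Nat.card_range_of_injective hinj]
  exact ⟨pathGraph_connected n, by simp⟩

lemma uC_mul_self (e : ET) : uC e * uC e = 1 := by
  have hrel := PresentedGroup.one_of_mem (rels := CRels) (Or.inl ⟨e, rfl⟩)
  rwa [map_mul] at hrel

lemma uC_commute {e f : ET} (h : ∀ v, ¬ (incidentT e v ∧ incidentT f v)) :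
    Commute (uC e) (uC f) := by
  have hrel := PresentedGroup.mk_eq_mk_of_mul_inv_mem (rels := CRels)
    (Or.inr (Or.inl ⟨e, f, h, rfl⟩))
  rwa [map_mul, map_mul] at hrel

lemma uC_braid {e f : ET} (h : ∃! v, incidentT e v ∧ incidentT f v) :
    uC e * uC f * uC e = uC f * uC e * uC f := by
  have hrel := PresentedGroup.mk_eq_mk_of_mul_inv_mem (rels := CRels)
    (Or.inr (Or.inr (Or.inl ⟨e, f, h, rfl⟩)))
  rwa [map_mul, map_mul, map_mul, map_mul] at hrel

-- A Hamiltonian path of `T`, sweeping the three rows of cells in turn.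
def pathEdge (i : ℕ) : ET :=
  [((0, 0), 0), ((0, 0), 1), ((2, 0), 0), ((2, 0), 1), ((1, 0), 0), ((1, 1), 2),
    ((1, 1), 0), ((1, 1), 1), ((0, 1), 0), ((0, 1), 1), ((2, 1), 0), ((2, 2), 2),
    ((2, 2), 0), ((2, 2), 1), ((1, 2), 0), ((1, 2), 1), ((0, 2), 0)].getD i ((0, 0), 0)

def pathVertex : Fin 18 → VT :=
  ![((0, 0), false), ((0, 0), true), ((2, 0), false), ((2, 0), true), ((1, 0), false),
    ((1, 0), true), ((1, 1), false), ((1, 1), true), ((0, 1), false), ((0, 1), true),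
    ((2, 1), false), ((2, 1), true), ((2, 2), false), ((2, 2), true), ((1, 2), false),
    ((1, 2), true), ((0, 2), false), ((0, 2), true)]

def pathEdgeSet : Set ET := pathEdge '' Iio 17

lemma pathVertex_bijective : Function.Bijective pathVertex := by decide

noncomputable def pathEquiv : Fin 18 ≃ VT := Equiv.ofBijective pathVertex pathVertex_bijective

lemma tE_pathEdge (i : Fin 17) :
    tE (pathEdge i) = swap (pathEquiv i.castSucc) (pathEquiv i.succ) := by
  revert i; decide

lemma existsUnique_incidentT_pathEdge_succ (i : Fin 16) :
    ∃! v, incidentT (pathEdge i) v ∧ incidentT (pathEdge (i + 1)) v := by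
  revert i; unfold ExistsUnique incidentT; decide

lemma not_incidentT_pathEdge (i j : Fin 17) (h : i.val + 1 < j.val) (v : VT) :
    ¬ (incidentT (pathEdge i) v ∧ incidentT (pathEdge j) v) := by
  revert i j v; unfold incidentT; decide

noncomputable def pathGraphIsoPathEdgeSet :
    pathGraph 18 ≃g fromRel fun a b : VT => ∃ e ∈ pathEdgeSet, incidentT e a ∧ incidentT e b where
  toEquiv := pathEquiv
  map_rel_iff' {a b} := by
    revert a b
    simp only [fromRel_adj, pathGraph_adj, pathEdgeSet, mem_image, mem_Iio, incidentT,
      exists_exists_and_eq_and, pathEquiv, ofBijective_apply]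
    decide

lemma isCoxeterTypeA_uC_pathEdge : IsCoxeterTypeA (uC ∘ pathEdge) 17 where
  mul_self _ _ := uC_mul_self _
  braid i hi := uC_braid (existsUnique_incidentT_pathEdge_succ ⟨i, by omega⟩)
  commute i j hij hj := uC_commute (not_incidentT_pathEdge ⟨i, by omega⟩ ⟨j, hj⟩ hij)

lemma closure_tE_pathEdgeSet : closure (tE '' pathEdgeSet) = ⊤ := by
  rw [pathEdgeSet, ← Fin.range_val, ← range_comp, ← range_comp]
  have hswap : tE ∘ pathEdge ∘ Fin.val = fun i : Fin 17 =>
      swap (pathEquiv i.castSucc) (pathEquiv i.succ) := funext tE_pathEdge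
  rw [hswap, Perm.closure_range_swap_eq_top]

theorem stmt16_general (ψ : Cgrp →* Equiv.Perm VT)
    (hψ : ∀ e : ET, ψ (uC e) = tE e) :
    ∃ (T0 : Set ET) (s : Equiv.Perm VT →* Cgrp),
      ψ.comp s = MonoidHom.id (Equiv.Perm VT) ∧
      (SimpleGraph.fromRel
        (fun a b : VT => ∃ e ∈ T0, incidentT e a ∧ incidentT e b)).IsTree ∧
      s.range = Subgroup.closure (uC '' T0) := by
  obtain ⟨hfin, hcard⟩ := isCoxeterTypeA_uC_pathEdge.finite_closure_and_natCard_le 17 le_rfl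
  rw [image_comp] at hfin hcard
  have : Finite (closure (uC '' pathEdgeSet)) := hfin
  have hmap : (closure (uC '' pathEdgeSet)).map ψ = ⊤ := by
    rw [MonoidHom.map_closure, image_image]
    simp only [hψ]
    exact closure_tE_pathEdgeSet
  have hcard_le : Nat.card (closure (uC '' pathEdgeSet)) ≤ Nat.card (Perm VT) := by
    rwa [Nat.card_perm, show Nat.card VT = 17 + 1 by simp]
  obtain ⟨s, hs, hrange⟩ := ψ.exists_rightInverse_range_eq hcard_le hmap
  exact ⟨pathEdgeSet, s, hs, pathGraphIsoPathEdgeSet.isTree_iff.1 (isTree_pathGraph 17), hrange⟩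

/-- The surjection `ψ_C : C → S₁₈` splits: there is a homomorphism
`s : S₁₈ → C` with `ψ_C ∘ s = id`; in fact `s` can be chosen so that its
image is the subgroup of `C` generated by the `u_e` for `e` in a spanning
tree `T₀` of `T`. -/
theorem stmt16 (ψ : Cgrp →* Equiv.Perm VT)
    (hψ : ∀ e : ET, ψ (uC e) = tE e) (hsurj : Function.Surjective ψ) :
    ∃ (T0 : Set ET) (s : Equiv.Perm VT →* Cgrp),
      ψ.comp s = MonoidHom.id (Equiv.Perm VT) ∧
      (SimpleGraph.fromRel
        (fun a b : VT => ∃ e ∈ T0, incidentT e a ∧ incidentT e b)).IsTree ∧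
      s.range = Subgroup.closure (uC '' T0) :=
  stmt16_general ψ hψ
end
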